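/- arXiv:math/0501162 — 6 statements merged into one kernel-verified Lean document; each statement's English description precedes it below -/
import Mathlib

section
/- The function J(u,v) = uv + α(1/u + 1/v) + β/(uv) is a first integral of the map f_{n+1} = (α + β/f_n)/(f_{n-1} f_n); that is, if w = (α + β/v)/(uv) with u, v, w nonzero, then J(u,v) = J(v,w). -/
/-! The difference of the invariant at consecutive points factors as
`J(u,v) - J(v,w) = (u - w) (v - (α + β/v)/(u w))`, and the map says exactly that
`α + β/v = u v w`, which kills the second factor. -/

namespace QRT

variable {K : Type*} [Field K]

def invariant (α β x y : K) : K := x * y + α * (1 / x + 1 / y) + β / (x * y)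

theorem invariant_sub_invariant (α β : K) {u w : K} (v : K) (hu : u ≠ 0) (hw : w ≠ 0) :
    invariant α β u v - invariant α β v w = (u - w) * (v - (α + β / v) / (u * w)) := by
  unfold invariant
  field_simp
  ring

theorem invariant_eq_of_map (α β : K) {u v w : K} (hu : u ≠ 0) (hv : v ≠ 0) (hw : w ≠ 0)
    (hmap : w = (α + β / v) / (u * v)) :
    invariant α β u v = invariant α β v w := by
  have hnum : α + β / v = u * v * w := by
    rw [hmap, mul_div_cancel₀ _ (mul_ne_zero hu hv)]
  rw [← sub_eq_zero, invariant_sub_invariant α β v hu hw, hnum]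
  field_simp
  ring

end QRT

/-- `J(u,v) = uv + α(1/u + 1/v) + β/(uv)` is a first integral of the map
`f_{n+1} = (α + β/f_n)/(f_{n-1} f_n)`. -/
theorem first_integral_of_map (α β : ℂ) (u v w : ℂ) (hu : u ≠ 0) (hv : v ≠ 0)
    (hw : w ≠ 0) (hmap : w = (α + β / v) / (u * v))
    (J : ℂ → ℂ → ℂ) (hJ : ∀ x y, J x y = x * y + α * (1 / x + 1 / y) + β / (x * y)) :
    J u v = J v w := by
  rw [hJ, hJ]
  exact QRT.invariant_eq_of_map α β hu hv hw hmap
end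

section
/- Suppose σ, ℘ : ℂ → ℂ satisfy the addition formula σ(z+w)σ(z−w) = σ(z)²σ(w)²(℘(w) − ℘(z)) for all z, w. Fix κ ∈ ℂ with σ(κ) ≠ 0 and define τ_n = σ(nκ)/σ(κ)^{n²}. Then the Hankel determinant relation τ_{n+m} τ_{n-m} = τ_m² τ_{n-1} τ_{n+1} − τ_{m-1} τ_{m+1} τ_n² holds for all m, n ∈ ℤ. -/
/-- Hankel determinant relation for the elliptic divisibility sequence
`τ_n = σ(nκ)/σ(κ)^{n²}`. -/
theorem eds_hankel (σ ℘ : ℂ → ℂ)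
    (hadd : ∀ z w : ℂ, σ (z + w) * σ (z - w) = σ z ^ 2 * σ w ^ 2 * (℘ w - ℘ z))
    (κ : ℂ) (hκ : σ κ ≠ 0)
    (τ : ℤ → ℂ) (hτ : ∀ n : ℤ, τ n = σ (n * κ) * (σ κ) ^ (-(n ^ 2 : ℤ))) :
    ∀ m n : ℤ, τ (n + m) * τ (n - m) =
      (τ m) ^ 2 * τ (n - 1) * τ (n + 1) - τ (m - 1) * τ (m + 1) * (τ n) ^ 2 := by
  intro m n
  set u := σ κ with hu
  have comb : ∀ (x y : ℂ) (i j k : ℤ), i + j = k → (x * u ^ i) * (y * u ^ j) = x * y * u ^ k := by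
    intro x y i j k h
    rw [← h, zpow_add₀ hκ]; ring
  have key : ∀ (x y z : ℂ) (i j k l : ℤ), i + i + j + k = l →
      (x * u ^ i) ^ 2 * (y * u ^ j) * (z * u ^ k) = x ^ 2 * (y * z) * u ^ l := by
    intro x y z i j k l h
    rw [← h, zpow_add₀ hκ, zpow_add₀ hκ, zpow_add₀ hκ]; ring
  have key2 : ∀ (x y z : ℂ) (i j k l : ℤ), i + j + k + k = l →
      (x * u ^ i) * (y * u ^ j) * (z * u ^ k) ^ 2 = (x * y) * z ^ 2 * u ^ l := by
    intro x y z i j k l h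
    rw [← h, zpow_add₀ hκ, zpow_add₀ hκ, zpow_add₀ hκ]; ring
  have hv : ∀ e : ℤ, u ^ 2 * u ^ (-(e + 2)) = u ^ (-e) := by
    intro e
    rw [show (u ^ 2 : ℂ) = u ^ (2:ℤ) by norm_cast, ← zpow_add₀ hκ]
    congr 1; ring
  have c1 : ((n + m : ℤ) : ℂ) * κ = (n:ℂ)*κ + (m:ℂ)*κ := by push_cast; ring
  have c2 : ((n - m : ℤ) : ℂ) * κ = (n:ℂ)*κ - (m:ℂ)*κ := by push_cast; ring
  have c3 : ((n + 1 : ℤ) : ℂ) * κ = (n:ℂ)*κ + κ := by push_cast; ring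
  have c4 : ((n - 1 : ℤ) : ℂ) * κ = (n:ℂ)*κ - κ := by push_cast; ring
  have c5 : ((m + 1 : ℤ) : ℂ) * κ = (m:ℂ)*κ + κ := by push_cast; ring
  have c6 : ((m - 1 : ℤ) : ℂ) * κ = (m:ℂ)*κ - κ := by push_cast; ring
  have h1 := hadd ((n:ℂ)*κ) ((m:ℂ)*κ)
  have h2 := hadd ((n:ℂ)*κ) κ
  have h3 := hadd ((m:ℂ)*κ) κ
  simp only [hτ, c1, c2, c3, c4, c5, c6]
  have L : σ ((n:ℂ)*κ + (m:ℂ)*κ) * u ^ (-((n+m)^2) : ℤ) *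
      (σ ((n:ℂ)*κ - (m:ℂ)*κ) * u ^ (-((n-m)^2) : ℤ)) =
      σ ((n:ℂ)*κ) ^ 2 * σ ((m:ℂ)*κ) ^ 2 * (℘ ((m:ℂ)*κ) - ℘ ((n:ℂ)*κ)) *
        u ^ (-(2*n^2 + 2*m^2) : ℤ) := by
    rw [comb _ _ _ _ (-(2*n^2 + 2*m^2)) (by ring), h1]
  have T1 : (σ ((m:ℂ)*κ) * u ^ (-(m^2)) ) ^ 2 * (σ ((n:ℂ)*κ - κ) * u ^ (-((n-1)^2) : ℤ)) *
      (σ ((n:ℂ)*κ + κ) * u ^ (-((n+1)^2) : ℤ)) =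
      σ ((n:ℂ)*κ) ^ 2 * σ ((m:ℂ)*κ) ^ 2 * (℘ κ - ℘ ((n:ℂ)*κ)) *
        u ^ (-(2*n^2 + 2*m^2) : ℤ) := by
    rw [key _ _ _ _ _ _ (-(2*n^2 + 2*m^2 + 2)) (by ring), mul_comm (σ ((n:ℂ)*κ - κ)), h2,
      ← hu]
    linear_combination (σ ((n:ℂ)*κ)^2 * σ ((m:ℂ)*κ)^2 * (℘ κ - ℘ ((n:ℂ)*κ))) *
      hv (2*n^2 + 2*m^2)
  have T2 : (σ ((m:ℂ)*κ - κ) * u ^ (-((m-1)^2) : ℤ)) * (σ ((m:ℂ)*κ + κ) * u ^ (-((m+1)^2) : ℤ)) *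
      (σ ((n:ℂ)*κ) * u ^ (-(n^2))) ^ 2 =
      σ ((n:ℂ)*κ) ^ 2 * σ ((m:ℂ)*κ) ^ 2 * (℘ κ - ℘ ((m:ℂ)*κ)) *
        u ^ (-(2*n^2 + 2*m^2) : ℤ) := by
    rw [key2 _ _ _ _ _ _ (-(2*n^2 + 2*m^2 + 2)) (by ring), mul_comm (σ ((m:ℂ)*κ - κ)), h3,
      ← hu]
    linear_combination (σ ((n:ℂ)*κ)^2 * σ ((m:ℂ)*κ)^2 * (℘ κ - ℘ ((m:ℂ)*κ))) *
      hv (2*n^2 + 2*m^2)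
  rw [L, T1, T2]
  ring
end

section
/- Let σ(u₁,u₂) = u₁ − u₂³/3, γ ≠ 0, v = (γ³/3, γ), and let u = (u₁,u₂) be such that σ(u + nv) ≠ 0 for all needed n. Define τ_n = A B^n σ(u + nv)/(−γ²)^{n²} for nonzero constants A, B. Then τ_{n+4} τ_{n-4} = α₃ τ_{n+3} τ_{n-3} + α₂ τ_{n+2} τ_{n-2} + α₁ τ_{n+1} τ_{n-1} + α₀ τ_n² holds with α₀ = −35/γ^{64}, α₁ = 56/γ^{60}, α₂ = −28/γ^{48}, α₃ = 8/γ^{28}. -/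
set_option maxHeartbeats 4000000


/-- The tau-sequence built from the Schur function `σ(u₁,u₂) = u₁ − u₂³/3`
on the degenerate curve y² = 4x⁵ satisfies the Somos 8 recurrence with the
explicit coefficients α₀ = −35/γ⁶⁴, α₁ = 56/γ⁶⁰, α₂ = −28/γ⁴⁸, α₃ = 8/γ²⁸. -/
theorem schur_somos8 (γ u1 u2 A B : ℂ) (hγ : γ ≠ 0) (hA : A ≠ 0) (hB : B ≠ 0)
    (σ : ℂ × ℂ → ℂ) (hσ : ∀ w : ℂ × ℂ, σ w = w.1 - w.2 ^ 3 / 3)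
    (τ : ℤ → ℂ)
    (hτ : ∀ n : ℤ, τ n = A * B ^ n * σ (u1 + n * γ ^ 3 / 3, u2 + n * γ)
      * (-γ ^ 2) ^ (-(n ^ 2 : ℤ)))
    (α₀ α₁ α₂ α₃ : ℂ)
    (hα₀ : α₀ = -35 / γ ^ 64) (hα₁ : α₁ = 56 / γ ^ 60)
    (hα₂ : α₂ = -28 / γ ^ 48) (hα₃ : α₃ = 8 / γ ^ 28) :
    ∀ n : ℤ, τ (n + 4) * τ (n - 4) =
      α₃ * τ (n + 3) * τ (n - 3) + α₂ * τ (n + 2) * τ (n - 2)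
        + α₁ * τ (n + 1) * τ (n - 1) + α₀ * (τ n) ^ 2 := by
  intro n
  have hc : (-γ ^ 2 : ℂ) ≠ 0 := by
    simpa using pow_ne_zero 2 hγ
  set c : ℂ := -γ ^ 2 with hcdef
  have hX : ∀ k : ℤ, τ (n + k) * τ (n - k)
      = (A * B ^ n * c ^ (-(n ^ 2 : ℤ))) ^ 2
        * (σ (u1 + (n + k) * γ ^ 3 / 3, u2 + (n + k) * γ)
          * σ (u1 + (n - k) * γ ^ 3 / 3, u2 + (n - k) * γ))
        * c ^ (-(2 * k ^ 2) : ℤ) := by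
    intro k
    have hb : B ^ (n + k) * B ^ (n - k) = B ^ n * B ^ n := by
      rw [← zpow_add₀ hB, ← zpow_add₀ hB]
      congr 1; ring
    have hcc : c ^ (-((n + k) ^ 2) : ℤ) * c ^ (-((n - k) ^ 2) : ℤ)
        = c ^ (-(n ^ 2) : ℤ) * c ^ (-(n ^ 2) : ℤ) * c ^ (-(2 * k ^ 2) : ℤ) := by
      rw [← zpow_add₀ hc, ← zpow_add₀ hc, ← zpow_add₀ hc]
      congr 1; ring
    calc τ (n + k) * τ (n - k)
        = A ^ 2 * (B ^ (n + k) * B ^ (n - k))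
            * (σ (u1 + (n + k) * γ ^ 3 / 3, u2 + (n + k) * γ)
              * σ (u1 + (n - k) * γ ^ 3 / 3, u2 + (n - k) * γ))
            * (c ^ (-((n + k) ^ 2) : ℤ) * c ^ (-((n - k) ^ 2) : ℤ)) := by
          rw [hτ, hτ]; push_cast; ring
      _ = A ^ 2 * (B ^ n * B ^ n)
            * (σ (u1 + (n + k) * γ ^ 3 / 3, u2 + (n + k) * γ)
              * σ (u1 + (n - k) * γ ^ 3 / 3, u2 + (n - k) * γ))
            * (c ^ (-(n ^ 2) : ℤ) * c ^ (-(n ^ 2) : ℤ) * c ^ (-(2 * k ^ 2) : ℤ)) := by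
          rw [hb, hcc]
      _ = _ := by ring
  have h0 : (τ n) ^ 2 = τ (n + 0) * τ (n - 0) := by
    rw [add_zero, sub_zero, sq]
  rw [h0, mul_assoc α₃, mul_assoc α₂, mul_assoc α₁, hX 4, hX 3, hX 2, hX 1, hX 0]
  simp only [hσ, hα₀, hα₁, hα₂, hα₃]
  have e32 : c ^ (-(2 * (4:ℤ) ^ 2) : ℤ) = (c ^ (32 : ℕ))⁻¹ := by
    rw [show -(2 * (4:ℤ) ^ 2) = -((32:ℕ):ℤ) by norm_num, zpow_neg, zpow_natCast]
  have e18 : c ^ (-(2 * (3:ℤ) ^ 2) : ℤ) = (c ^ (18 : ℕ))⁻¹ := by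
    rw [show -(2 * (3:ℤ) ^ 2) = -((18:ℕ):ℤ) by norm_num, zpow_neg, zpow_natCast]
  have e8 : c ^ (-(2 * (2:ℤ) ^ 2) : ℤ) = (c ^ (8 : ℕ))⁻¹ := by
    rw [show -(2 * (2:ℤ) ^ 2) = -((8:ℕ):ℤ) by norm_num, zpow_neg, zpow_natCast]
  have e2 : c ^ (-(2 * (1:ℤ) ^ 2) : ℤ) = (c ^ (2 : ℕ))⁻¹ := by
    rw [show -(2 * (1:ℤ) ^ 2) = -((2:ℕ):ℤ) by norm_num, zpow_neg, zpow_natCast]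
  have e0 : c ^ (-(2 * (0:ℤ) ^ 2) : ℤ) = 1 := by norm_num
  rw [e32, e18, e8, e2, e0]
  push_cast
  rw [hcdef]
  field_simp
  ring
end

section
/- If a sequence (τ_n) of nonzero elements of a field satisfies the Somos 8 bilinear recurrence τ_{n+4}τ_{n-4} = α₃ τ_{n+3}τ_{n-3} + α₂ τ_{n+2}τ_{n-2} + α₁ τ_{n+1}τ_{n-1} + α₀ τ_n², then the sequence f_n = τ_{n+1}τ_{n-1}/τ_n² satisfies the sixth-order difference equation f_n⁴ (f_{n+1}f_{n-1})³ (f_{n+2}f_{n-2})² (f_{n+3}f_{n-3}) = α₀ + α₁ f_n + α₂ f_n² (f_{n+1}f_{n-1}) + α₃ f_n³ (f_{n+1}f_{n-1})² (f_{n+2}f_{n-2}). -/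
/-- A Somos 8 sequence of nonzero field elements yields a solution of the
sixth-order nonlinear difference equation for `f_n = τ_{n+1}τ_{n-1}/τ_n²`. -/
theorem somos8_to_sixth_order {K : Type*} [Field K] (α₀ α₁ α₂ α₃ : K)
    (τ : ℤ → K) (hτ : ∀ n, τ n ≠ 0)
    (hrec : ∀ n : ℤ, τ (n + 4) * τ (n - 4) =
      α₃ * τ (n + 3) * τ (n - 3) + α₂ * τ (n + 2) * τ (n - 2)
        + α₁ * τ (n + 1) * τ (n - 1) + α₀ * (τ n) ^ 2)
    (f : ℤ → K) (hf : ∀ n, f n = τ (n + 1) * τ (n - 1) / (τ n) ^ 2) :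
    ∀ n : ℤ, (f n) ^ 4 * (f (n + 1) * f (n - 1)) ^ 3 * (f (n + 2) * f (n - 2)) ^ 2
        * (f (n + 3) * f (n - 3)) =
      α₀ + α₁ * f n + α₂ * (f n) ^ 2 * (f (n + 1) * f (n - 1))
        + α₃ * (f n) ^ 3 * (f (n + 1) * f (n - 1)) ^ 2 * (f (n + 2) * f (n - 2)) := by
  intro n
  have L : (f n) ^ 4 * (f (n + 1) * f (n - 1)) ^ 3 * (f (n + 2) * f (n - 2)) ^ 2
      * (f (n + 3) * f (n - 3)) = τ (n + 4) * τ (n - 4) / (τ n) ^ 2 := by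
    simp only [hf]
    simp only [show n+1+1 = n+2 by ring, show n+1-1 = n by ring, show n-1+1 = n by ring,
      show n-1-1 = n-2 by ring, show n+2+1 = n+3 by ring, show n+2-1 = n+1 by ring,
      show n-2+1 = n-1 by ring, show n-2-1 = n-3 by ring, show n+3+1 = n+4 by ring,
      show n+3-1 = n+2 by ring, show n-3+1 = n-2 by ring, show n-3-1 = n-4 by ring]
    simp only [div_pow, div_mul_div_comm]
    rw [div_eq_div_iff (by simp [hτ, pow_ne_zero, mul_ne_zero]) (by simp [hτ, pow_ne_zero])]
    ring
  have A2 : (f n) ^ 2 * (f (n + 1) * f (n - 1)) = τ (n + 2) * τ (n - 2) / (τ n) ^ 2 := by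
    simp only [hf]
    simp only [show n+1+1 = n+2 by ring, show n+1-1 = n by ring, show n-1+1 = n by ring,
      show n-1-1 = n-2 by ring]
    simp only [div_pow, div_mul_div_comm]
    rw [div_eq_div_iff (by simp [hτ, pow_ne_zero, mul_ne_zero]) (by simp [hτ, pow_ne_zero])]
    ring
  have A3 : (f n) ^ 3 * (f (n + 1) * f (n - 1)) ^ 2 * (f (n + 2) * f (n - 2))
      = τ (n + 3) * τ (n - 3) / (τ n) ^ 2 := by
    simp only [hf]
    simp only [show n+1+1 = n+2 by ring, show n+1-1 = n by ring, show n-1+1 = n by ring,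
      show n-1-1 = n-2 by ring, show n+2+1 = n+3 by ring, show n+2-1 = n+1 by ring,
      show n-2+1 = n-1 by ring, show n-2-1 = n-3 by ring]
    simp only [div_pow, div_mul_div_comm]
    rw [div_eq_div_iff (by simp [hτ, pow_ne_zero, mul_ne_zero]) (by simp [hτ, pow_ne_zero])]
    ring
  have key : τ (n + 4) * τ (n - 4) / (τ n) ^ 2
      = α₀ + α₁ * (τ (n + 1) * τ (n - 1) / (τ n) ^ 2)
        + α₂ * (τ (n + 2) * τ (n - 2) / (τ n) ^ 2)
        + α₃ * (τ (n + 3) * τ (n - 3) / (τ n) ^ 2) := by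
    have h0 := hτ n
    field_simp
    linear_combination hrec n
  linear_combination L + key - α₁ * (hf n) - α₂ * A2 - α₃ * A3
end

section
/- Ward's elliptic divisibility recurrence τ_{n+2}τ_{n-2} = τ_2² τ_{n+1}τ_{n-1} − τ_1 τ_3 τ_n² with τ_0 = 0, τ_1 = 1, integer values τ_2, τ_3, τ_4 satisfying τ_2 ≠ 0 and τ_2 | τ_4, extended by τ_{−n} = −τ_n, produces an integer sequence at least up to τ_8; that is, τ_5, τ_6, τ_7, τ_8 ∈ ℤ. -/
/-!
Write `τ₄ = τ₂ k`. Then τ₅, …, τ₈ are integer polynomials in `τ₂, τ₃, k`, and each division in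
the recurrence is exact: its numerator is, as a polynomial identity, the divisor times the next
polynomial.
-/

lemma intCast_div_eq_of_mul_eq {K : Type*} [Field K] [CharZero K] {n d q : ℤ} (hd : d ≠ 0)
    (h : d * q = n) : (n : K) / d = q := by
  rw [div_eq_iff (Int.cast_ne_zero.mpr hd), ← h, Int.cast_mul, mul_comm]

namespace Ward

variable (τ2 τ3 k : ℤ)

def tau5 : ℤ := τ2 ^ 4 * k - τ3 ^ 3

def tau6 : ℤ := τ2 * τ3 * (τ2 ^ 4 * k - τ3 ^ 3 - k ^ 2)

def tau7 : ℤ := τ2 ^ 4 * k * τ3 ^ 3 - τ2 ^ 4 * k ^ 3 - τ3 ^ 6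

def tau8 : ℤ := τ2 * k * (3 * τ2 ^ 4 * τ3 ^ 3 * k - τ2 ^ 8 * k ^ 2 - τ3 ^ 3 * k ^ 2 - 2 * τ3 ^ 6)

lemma tau5_eq : tau5 τ2 τ3 k = τ2 ^ 2 * (τ2 * k) * τ2 - τ3 * τ3 ^ 2 := by
  unfold tau5; ring

lemma tau2_mul_tau6 :
    τ2 * tau6 τ2 τ3 k = τ2 ^ 2 * tau5 τ2 τ3 k * τ3 - τ3 * (τ2 * k) ^ 2 := by
  unfold tau5 tau6; ring

lemma tau3_mul_tau7 :
    τ3 * tau7 τ2 τ3 k = τ2 ^ 2 * tau6 τ2 τ3 k * (τ2 * k) - τ3 * tau5 τ2 τ3 k ^ 2 := by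
  unfold tau5 tau6 tau7; ring

lemma tau4_mul_tau8 :
    τ2 * k * tau8 τ2 τ3 k = τ2 ^ 2 * tau7 τ2 τ3 k * tau5 τ2 τ3 k - τ3 * tau6 τ2 τ3 k ^ 2 := by
  unfold tau5 tau6 tau7 tau8; ring

end Ward

open Ward in
/-- Ward's elliptic divisibility recurrence produces integers at least up to τ₈. -/
theorem ward_integrality (τ2 τ3 τ4 : ℤ) (h2 : τ2 ≠ 0) (h3 : τ3 ≠ 0) (h4 : τ4 ≠ 0)
    (hdvd : τ2 ∣ τ4)
    (t5 t6 t7 t8 : ℚ)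
    (ht5 : t5 = ((τ2 : ℚ) ^ 2 * τ4 * τ2 - τ3 * τ3 ^ 2) / 1)
    (ht6 : t6 = ((τ2 : ℚ) ^ 2 * t5 * τ3 - τ3 * τ4 ^ 2) / τ2)
    (ht7 : t7 = ((τ2 : ℚ) ^ 2 * t6 * τ4 - τ3 * t5 ^ 2) / τ3)
    (ht8 : t8 = ((τ2 : ℚ) ^ 2 * t7 * t5 - τ3 * t6 ^ 2) / τ4) :
    (∃ z : ℤ, t5 = (z : ℚ)) ∧ (∃ z : ℤ, t6 = (z : ℚ)) ∧
      (∃ z : ℤ, t7 = (z : ℚ)) ∧ (∃ z : ℤ, t8 = (z : ℚ)) := by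
  obtain ⟨k, rfl⟩ := hdvd
  have e5 : t5 = tau5 τ2 τ3 k := by
    rw [ht5, div_one]; exact_mod_cast (tau5_eq τ2 τ3 k).symm
  have e6 : t6 = tau6 τ2 τ3 k := by
    rw [ht6, e5, ← intCast_div_eq_of_mul_eq h2 (tau2_mul_tau6 τ2 τ3 k)]; push_cast; rfl
  have e7 : t7 = tau7 τ2 τ3 k := by
    rw [ht7, e6, e5, ← intCast_div_eq_of_mul_eq h3 (tau3_mul_tau7 τ2 τ3 k)]; push_cast; rfl
  have e8 : t8 = tau8 τ2 τ3 k := by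
    rw [ht8, e7, e6, e5, ← intCast_div_eq_of_mul_eq h4 (tau4_mul_tau8 τ2 τ3 k)]; push_cast; rfl
  exact ⟨⟨_, e5⟩, ⟨_, e6⟩, ⟨_, e7⟩, ⟨_, e8⟩⟩
end

section
/- The Hamiltonians h₁ and h₂ of the case (ii) Hénon–Heiles system Poisson-commute: {h₁, h₂} = 0, where the Poisson bracket is the canonical one in coordinates (q₁, q₂, p₁, p₂). -/
section Laurent

variable {𝕜 : Type*} [NontriviallyNormedField 𝕜]

theorem hasDerivAt_quartic (A B C D E x : 𝕜) :
    HasDerivAt (fun s : 𝕜 => A * s ^ 4 + B * s ^ 3 + C * s ^ 2 + D * s + E)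
      (4 * A * x ^ 3 + 3 * B * x ^ 2 + 2 * C * x + D) x := by
  have h := (((((hasDerivAt_pow 4 x).const_mul A).add
    ((hasDerivAt_pow 3 x).const_mul B)).add ((hasDerivAt_pow 2 x).const_mul C)).add
    ((hasDerivAt_id x).const_mul D)).add_const E
  refine h.congr_deriv ?_
  push_cast
  ring

theorem hasDerivAt_quartic_add_div_sq (A B C D E K : 𝕜) {x : 𝕜} (hx : x ≠ 0) :
    HasDerivAt (fun s : 𝕜 => A * s ^ 4 + B * s ^ 3 + C * s ^ 2 + D * s + E + K / s ^ 2)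
      (4 * A * x ^ 3 + 3 * B * x ^ 2 + 2 * C * x + D - 2 * K / x ^ 3) x := by
  have h := (hasDerivAt_quartic A B C D E x).add
    ((hasDerivAt_const x K).div (hasDerivAt_pow 2 x) (pow_ne_zero 2 hx))
  refine h.congr_deriv ?_
  field_simp
  ring

end Laurent

namespace HenonHeiles

noncomputable def h₁ (a c m q₁ q₂ p₁ p₂ : ℝ) : ℝ :=
  (1 / 2) * (p₁ ^ 2 + p₂ ^ 2) + q₂ ^ 3 + (1 / 2) * q₂ * q₁ ^ 2
    - (1 / 2) * a * q₁ ^ 2 + c * q₂ - m ^ 2 / (2 * q₁ ^ 2)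

noncomputable def h₂ (a c m q₁ q₂ p₁ p₂ : ℝ) : ℝ :=
  (1 / 4) * (q₂ + 2 * a) * p₁ ^ 2 - (1 / 4) * q₁ * p₁ * p₂
    - (1 / 32) * q₁ ^ 4 - (1 / 8) * (q₂ ^ 2 - 2 * a * q₂ + c + 4 * a ^ 2) * q₁ ^ 2
    - m ^ 2 * (q₂ + 2 * a) / (4 * q₁ ^ 2)

variable (a c m q₁ q₂ p₁ p₂ : ℝ)

theorem hasDerivAt_h₁_q₁ (hq₁ : q₁ ≠ 0) :
    HasDerivAt (fun s => h₁ a c m s q₂ p₁ p₂)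
      ((q₂ - a) * q₁ + m ^ 2 / q₁ ^ 3) q₁ := by
  have h := hasDerivAt_quartic_add_div_sq 0 0 ((q₂ - a) / 2) 0
    ((p₁ ^ 2 + p₂ ^ 2) / 2 + q₂ ^ 3 + c * q₂) (-m ^ 2 / 2) hq₁
  refine (h.congr_of_eventuallyEq (.of_forall fun s => ?_)).congr_deriv ?_
  · simp only [h₁]; ring
  · ring

theorem hasDerivAt_h₁_q₂ :
    HasDerivAt (fun s => h₁ a c m q₁ s p₁ p₂) (3 * q₂ ^ 2 + q₁ ^ 2 / 2 + c) q₂ := by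
  have h := hasDerivAt_quartic 0 1 0 (q₁ ^ 2 / 2 + c) (h₁ a c m q₁ 0 p₁ p₂) q₂
  refine (h.congr_of_eventuallyEq (.of_forall fun s => ?_)).congr_deriv ?_
  · simp only [h₁]; ring
  · ring

theorem hasDerivAt_h₁_p₁ : HasDerivAt (fun s => h₁ a c m q₁ q₂ s p₂) p₁ p₁ := by
  have h := hasDerivAt_quartic 0 0 (1 / 2) 0 (h₁ a c m q₁ q₂ 0 p₂) p₁
  refine (h.congr_of_eventuallyEq (.of_forall fun s => ?_)).congr_deriv ?_
  · simp only [h₁]; ring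
  · ring

theorem hasDerivAt_h₁_p₂ : HasDerivAt (fun s => h₁ a c m q₁ q₂ p₁ s) p₂ p₂ := by
  have h := hasDerivAt_quartic 0 0 (1 / 2) 0 (h₁ a c m q₁ q₂ p₁ 0) p₂
  refine (h.congr_of_eventuallyEq (.of_forall fun s => ?_)).congr_deriv ?_
  · simp only [h₁]; ring
  · ring

theorem hasDerivAt_h₂_q₁ (hq₁ : q₁ ≠ 0) :
    HasDerivAt (fun s => h₂ a c m s q₂ p₁ p₂)
      (-(p₁ * p₂) / 4 - q₁ ^ 3 / 8 - (q₂ ^ 2 - 2 * a * q₂ + c + 4 * a ^ 2) * q₁ / 4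
        + m ^ 2 * (q₂ + 2 * a) / (2 * q₁ ^ 3)) q₁ := by
  have h := hasDerivAt_quartic_add_div_sq (-1 / 32) 0
    (-(q₂ ^ 2 - 2 * a * q₂ + c + 4 * a ^ 2) / 8) (-(p₁ * p₂) / 4)
    ((q₂ + 2 * a) * p₁ ^ 2 / 4) (-m ^ 2 * (q₂ + 2 * a) / 4) hq₁
  refine (h.congr_of_eventuallyEq (.of_forall fun s => ?_)).congr_deriv ?_
  · simp only [h₂]; ring
  · ring

theorem hasDerivAt_h₂_q₂ :
    HasDerivAt (fun s => h₂ a c m q₁ s p₁ p₂)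
      (p₁ ^ 2 / 4 - (q₂ - a) * q₁ ^ 2 / 4 - m ^ 2 / (4 * q₁ ^ 2)) q₂ := by
  have h := hasDerivAt_quartic 0 0 (-q₁ ^ 2 / 8)
    (p₁ ^ 2 / 4 + a * q₁ ^ 2 / 4 - m ^ 2 / (4 * q₁ ^ 2)) (h₂ a c m q₁ 0 p₁ p₂) q₂
  refine (h.congr_of_eventuallyEq (.of_forall fun s => ?_)).congr_deriv ?_
  · simp only [h₂]; ring
  · ring

theorem hasDerivAt_h₂_p₁ :
    HasDerivAt (fun s => h₂ a c m q₁ q₂ s p₂)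
      ((q₂ + 2 * a) * p₁ / 2 - q₁ * p₂ / 4) p₁ := by
  have h := hasDerivAt_quartic 0 0 ((q₂ + 2 * a) / 4) (-(q₁ * p₂) / 4)
    (h₂ a c m q₁ q₂ 0 p₂) p₁
  refine (h.congr_of_eventuallyEq (.of_forall fun s => ?_)).congr_deriv ?_
  · simp only [h₂]; ring
  · ring

theorem hasDerivAt_h₂_p₂ :
    HasDerivAt (fun s => h₂ a c m q₁ q₂ p₁ s) (-(q₁ * p₁) / 4) p₂ := by
  have h := hasDerivAt_quartic 0 0 0 (-(q₁ * p₁) / 4) (h₂ a c m q₁ q₂ p₁ 0) p₂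
  refine (h.congr_of_eventuallyEq (.of_forall fun s => ?_)).congr_deriv ?_
  · simp only [h₂]; ring
  · ring

end HenonHeiles

open HenonHeiles in
/-- The two Hamiltonians of the case (ii) Hénon–Heiles system Poisson-commute:
`{h₁, h₂} = 0` for the canonical Poisson bracket, expressed via partial
derivatives in the coordinates (q₁, q₂, p₁, p₂). -/
theorem henon_heiles_commuting (a c m : ℝ)
    (h1 h2 : ℝ → ℝ → ℝ → ℝ → ℝ)
    (hh1 : ∀ q1 q2 p1 p2, h1 q1 q2 p1 p2 =
      (1 / 2) * (p1 ^ 2 + p2 ^ 2) + q2 ^ 3 + (1 / 2) * q2 * q1 ^ 2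
        - (1 / 2) * a * q1 ^ 2 + c * q2 - m ^ 2 / (2 * q1 ^ 2))
    (hh2 : ∀ q1 q2 p1 p2, h2 q1 q2 p1 p2 =
      (1 / 4) * (q2 + 2 * a) * p1 ^ 2 - (1 / 4) * q1 * p1 * p2
        - (1 / 32) * q1 ^ 4 - (1 / 8) * (q2 ^ 2 - 2 * a * q2 + c + 4 * a ^ 2) * q1 ^ 2
        - m ^ 2 * (q2 + 2 * a) / (4 * q1 ^ 2)) :
    ∀ q1 q2 p1 p2 : ℝ, q1 ≠ 0 →
      (deriv (fun s => h1 q1 q2 s p2) p1) * (deriv (fun s => h2 s q2 p1 p2) q1)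
        - (deriv (fun s => h1 s q2 p1 p2) q1) * (deriv (fun s => h2 q1 q2 s p2) p1)
      + (deriv (fun s => h1 q1 q2 p1 s) p2) * (deriv (fun s => h2 q1 s p1 p2) q2)
        - (deriv (fun s => h1 q1 s p1 p2) q2) * (deriv (fun s => h2 q1 q2 p1 s) p2)
      = 0 := by
  obtain rfl : h1 = h₁ a c m := by funext q₁ q₂ p₁ p₂; exact hh1 q₁ q₂ p₁ p₂
  obtain rfl : h2 = h₂ a c m := by funext q₁ q₂ p₁ p₂; exact hh2 q₁ q₂ p₁ p₂
  intro q₁ q₂ p₁ p₂ hq₁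
  rw [(hasDerivAt_h₁_p₁ ..).deriv, (hasDerivAt_h₁_q₁ a c m q₁ q₂ p₁ p₂ hq₁).deriv,
    (hasDerivAt_h₁_p₂ ..).deriv, (hasDerivAt_h₁_q₂ ..).deriv,
    (hasDerivAt_h₂_q₁ a c m q₁ q₂ p₁ p₂ hq₁).deriv, (hasDerivAt_h₂_p₁ ..).deriv,
    (hasDerivAt_h₂_q₂ ..).deriv, (hasDerivAt_h₂_p₂ ..).deriv]
  field_simp
  ring
end
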